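/- arXiv:2604.03923 — 4 statements merged into one kernel-verified Lean document; each statement's English description precedes it below -/
import Mathlib

section
/- Let A be an n×n Hermitian positive-definite matrix with largest eigenvalue λmax, let σ ≥ 0 be real, and let b, x be vectors in ℂⁿ. Then ‖A(σI + A)⁻¹ b − A x‖₂ ≤ (1/(1 + σ/λmax)) · ‖b − (σI + A) x‖₂. -/
open Matrix
open scoped ComplexOrder

/-!
With `B = σ • 1 + A` and `y = B⁻¹ b - x`, the two sides are `‖A y‖` and `‖B y‖`. In an orthonormal
eigenbasis of `A` both act diagonally, with eigenvalues `λᵢ` and `σ + λᵢ`, and the ratio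
`λᵢ / (σ + λᵢ)` increases with `λᵢ`, so it is at most `λmax / (σ + λmax) = 1 / (1 + σ / λmax)`.
-/

namespace OrthonormalBasis

variable {ι 𝕜 E : Type*} [Fintype ι] [RCLike 𝕜] [NormedAddCommGroup E] [InnerProductSpace 𝕜 E]
  (e : OrthonormalBasis ι 𝕜 E)

theorem repr_apply_of_apply_eq_smul {T : E →ₗ[𝕜] E} {μ : ι → 𝕜} (hT : ∀ i, T (e i) = μ i • e i)
    (y : E) (i : ι) : e.repr (T y) i = μ i * e.repr y i := by
  classical
  conv_lhs => rw [← e.sum_repr y]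
  simp [map_sum, hT, smul_smul, e.repr_self, Pi.single_apply, mul_comm]

theorem norm_apply_le_mul_norm_apply_of_apply_eq_smul {S T : E →ₗ[𝕜] E} {μ ν : ι → 𝕜}
    (hS : ∀ i, S (e i) = μ i • e i) (hT : ∀ i, T (e i) = ν i • e i) {c : ℝ} (hc : 0 ≤ c)
    (hμν : ∀ i, ‖μ i‖ ≤ c * ‖ν i‖) (y : E) : ‖S y‖ ≤ c * ‖T y‖ := by
  refine le_of_sq_le_sq ?_ (by positivity)
  rw [mul_pow, ← e.repr.norm_map, ← e.repr.norm_map, EuclideanSpace.norm_sq_eq,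
    EuclideanSpace.norm_sq_eq, Finset.mul_sum]
  refine Finset.sum_le_sum fun i _ => ?_
  rw [e.repr_apply_of_apply_eq_smul hS, e.repr_apply_of_apply_eq_smul hT, norm_mul, norm_mul,
    ← mul_pow, ← mul_assoc]
  gcongr
  exact hμν i

end OrthonormalBasis

namespace Matrix.IsHermitian

variable {𝕜 n : Type*} [RCLike 𝕜] [Fintype n] [DecidableEq n] {A : Matrix n n 𝕜}
  (hA : A.IsHermitian)

theorem toEuclideanLin_eigenvectorBasis (i : n) :
    toEuclideanLin A (hA.eigenvectorBasis i) = (hA.eigenvalues i : 𝕜) • hA.eigenvectorBasis i := by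
  ext j
  rw [toLpLin_apply, WithLp.ofLp_toLp, hA.mulVec_eigenvectorBasis,
    RCLike.real_smul_eq_coe_smul (K := 𝕜)]
  rfl

theorem toEuclideanLin_smul_one_add_eigenvectorBasis (s : ℝ) (i : n) :
    toEuclideanLin ((s : 𝕜) • 1 + A) (hA.eigenvectorBasis i) =
      ((s + hA.eigenvalues i : ℝ) : 𝕜) • hA.eigenvectorBasis i := by
  rw [map_add, map_smul, LinearMap.add_apply, hA.toEuclideanLin_eigenvectorBasis,
    RCLike.ofReal_add, add_smul]
  simp

end Matrix.IsHermitian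

theorem le_one_div_one_add_div_mul_add {l L σ : ℝ} (hl : 0 < l) (hlL : l ≤ L) (hσ : 0 ≤ σ) :
    l ≤ 1 / (1 + σ / L) * (σ + l) := by
  have hL : 0 < L := hl.trans_le hlL
  rw [one_add_div hL.ne', one_div_div, div_mul_eq_mul_div, le_div_iff₀ (by positivity)]
  nlinarith

theorem stmt0 {n : ℕ} (A : Matrix (Fin n) (Fin n) ℂ) (hA : A.PosDef)
    (lammax : ℝ)
    (hmax : ∀ i, hA.isHermitian.eigenvalues i ≤ lammax)
    (hmem : ∃ i, hA.isHermitian.eigenvalues i = lammax)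
    (σ : ℝ) (hσ : 0 ≤ σ) (b x : EuclideanSpace ℂ (Fin n)) :
    ‖Matrix.toEuclideanLin (A * ((σ : ℂ) • (1 : Matrix (Fin n) (Fin n) ℂ) + A)⁻¹) b
        - Matrix.toEuclideanLin A x‖ ≤
      (1 / (1 + σ / lammax)) *
        ‖b - Matrix.toEuclideanLin ((σ : ℂ) • (1 : Matrix (Fin n) (Fin n) ℂ) + A) x‖ := by
  set B := (σ : ℂ) • (1 : Matrix (Fin n) (Fin n) ℂ) + A
  have hB : IsUnit B.det := (isUnit_iff_isUnit_det B).mp <|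
    (PosDef.posSemidef_add (PosSemidef.one.smul (Complex.zero_le_real.mpr hσ)) hA).isUnit
  set y := toEuclideanLin B⁻¹ b - x
  have hAy : toEuclideanLin (A * B⁻¹) b - toEuclideanLin A x = toEuclideanLin A y := by
    simp [y]
  have hBy : b - toEuclideanLin B x = toEuclideanLin B y := by
    rw [map_sub, ← LinearMap.comp_apply, ← toLpLin_mul_same, mul_nonsing_inv B hB, toLpLin_one]
    rfl
  obtain ⟨i₀, rfl⟩ := hmem
  have hpos := hA.eigenvalues_pos
  rw [hAy, hBy]
  refine hA.isHermitian.eigenvectorBasis.norm_apply_le_mul_norm_apply_of_apply_eq_smul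
    hA.isHermitian.toEuclideanLin_eigenvectorBasis
    (hA.isHermitian.toEuclideanLin_smul_one_add_eigenvectorBasis σ) ?_ (fun i => ?_) y
  · have := hpos i₀
    positivity
  · have hσi : 0 < σ + hA.isHermitian.eigenvalues i := by linarith [hpos i]
    rw [RCLike.norm_ofReal, RCLike.norm_ofReal, abs_of_pos (hpos i), abs_of_pos hσi]
    exact le_one_div_one_add_div_mul_add (hpos i) (hmax i) hσ
end

section
/- Let A be an n×n Hermitian positive-definite matrix with largest eigenvalue λmax, let 0 < α < 1, and for k = 1,…,m let tₖ ≥ 0 be quadrature nodes with weights wₖ > 0. Define gₖ = (sin(απ)/(απ)) wₖ A (tₖ^{1/α} I + A)⁻¹ b and, for approximate solutions x̃ₖ of (tₖ^{1/α} I + A) x = b with residuals rₖ = b − (tₖ^{1/α} I + A) x̃ₖ, define g̃ₖ = (sin(απ)/(απ)) wₖ A x̃ₖ. If for every k, ‖rₖ‖₂ ≤ (ε/(2m)) · (απ/sin(απ)) · (1 + tₖ^{1/α}/λmax)/wₖ, then ‖∑ₖ gₖ − ∑ₖ g̃ₖ‖₂ ≤ ε/2. -/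
/-!
With `τₖ = tₖ^(1/α)` and `rₖ = b - (τₖ + A) x̃ₖ`, the `k`-th error term is
`(sin(απ)/(απ)) wₖ A (τₖ + A)⁻¹ rₖ`. Diagonalising `A` by a unitary shows that the spectral norm
of `A (τ + A)⁻¹` is the largest of the numbers `λ / (τ + λ)` over the eigenvalues `λ` of `A`, hence
at most `λmax / (τ + λmax)` because `λ ↦ λ / (τ + λ)` is increasing. This factor cancels
`(1 + τₖ / λmax)` in the residual bound, so each error term has norm at most `ε / (2m)`.
-/

open Matrix Unitary
open scoped ComplexOrder Matrix.Norms.L2Operator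

namespace Matrix

variable {𝕜 ι : Type*} [RCLike 𝕜] [Fintype ι] [DecidableEq ι]

lemma norm_toEuclideanLin_apply_le (M : Matrix ι ι 𝕜) (v : EuclideanSpace 𝕜 ι) :
    ‖toEuclideanLin M v‖ ≤ ‖M‖ * ‖v‖ :=
  (toEuclideanCLM (n := ι) (𝕜 := 𝕜) M).le_opNorm v

lemma l2_opNorm_conjStarAlgAut (U : unitary (Matrix ι ι 𝕜)) (M : Matrix ι ι 𝕜) :
    ‖conjStarAlgAut 𝕜 _ U M‖ = ‖M‖ := by
  rw [conjStarAlgAut_apply, ← Unitary.coe_star, CStarRing.norm_mul_coe_unitary,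
    CStarRing.norm_coe_unitary_mul]

lemma toEuclideanLin_mul_apply (M N : Matrix ι ι 𝕜) (v : EuclideanSpace 𝕜 ι) :
    toEuclideanLin (M * N) v = toEuclideanLin M (toEuclideanLin N v) := by
  change toEuclideanCLM (n := ι) (𝕜 := 𝕜) (M * N) v = _
  rw [map_mul]
  rfl

lemma toEuclideanLin_mul_inv_sub {A T : Matrix ι ι 𝕜} (hT : IsUnit T.det)
    (b x : EuclideanSpace 𝕜 ι) :
    toEuclideanLin (A * T⁻¹) b - toEuclideanLin A x =
      toEuclideanLin (A * T⁻¹) (b - toEuclideanLin T x) := by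
  rw [map_sub, ← toEuclideanLin_mul_apply, nonsing_inv_mul_cancel_right _ _ hT]

lemma IsHermitian.mul_inv_smul_one_add {A : Matrix ι ι 𝕜} (hA : A.IsHermitian) {τ : ℝ}
    (hτ : ∀ i, τ + hA.eigenvalues i ≠ 0) :
    A * (τ • 1 + A)⁻¹ = conjStarAlgAut 𝕜 _ hA.eigenvectorUnitary
      (diagonal (RCLike.ofReal ∘ fun i ↦ hA.eigenvalues i / (τ + hA.eigenvalues i))) := by
  set φ := conjStarAlgAut 𝕜 _ hA.eigenvectorUnitary
  have hT : τ • 1 + A = φ (diagonal (RCLike.ofReal ∘ fun i ↦ τ + hA.eigenvalues i)) := by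
    conv_lhs => rw [hA.spectral_theorem]
    rw [RCLike.real_smul_eq_coe_smul (K := 𝕜), ← map_one φ, ← map_smul, ← map_add,
      smul_one_eq_diagonal, diagonal_add]
    congr 2
    ext i
    simp
  have hTinv : (τ • 1 + A)⁻¹ = φ (diagonal (RCLike.ofReal ∘ fun i ↦ (τ + hA.eigenvalues i)⁻¹)) := by
    refine inv_eq_right_inv ?_
    rw [hT, ← map_mul, diagonal_mul_diagonal, ← map_one φ, ← diagonal_one]
    congr 2
    ext i
    rw [Function.comp_apply, Function.comp_apply, ← RCLike.ofReal_mul, mul_inv_cancel₀ (hτ i),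
      RCLike.ofReal_one]
  conv_lhs => enter [1]; rw [hA.spectral_theorem]
  rw [hTinv, ← map_mul, diagonal_mul_diagonal]
  congr 2
  ext i
  rw [Function.comp_apply, Function.comp_apply, Function.comp_apply, ← RCLike.ofReal_mul,
    div_eq_mul_inv]

lemma PosDef.l2_opNorm_mul_inv_smul_one_add_le {A : Matrix ι ι 𝕜} (hA : A.PosDef) {τ L : ℝ}
    (hτ : 0 ≤ τ) (hL : 0 ≤ L) (hAL : ∀ i, hA.isHermitian.eigenvalues i ≤ L) :
    ‖A * (τ • 1 + A)⁻¹‖ ≤ L / (τ + L) := by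
  have hpos := hA.eigenvalues_pos
  rw [hA.isHermitian.mul_inv_smul_one_add fun i ↦ (add_pos_of_nonneg_of_pos hτ (hpos i)).ne',
    l2_opNorm_conjStarAlgAut, l2_opNorm_diagonal, pi_norm_le_iff_of_nonneg (by positivity)]
  intro i
  have := hpos i
  rw [Function.comp_apply, RCLike.norm_ofReal, abs_of_pos (by positivity),
    div_le_div_iff₀ (by positivity) (by linarith [hAL i])]
  nlinarith [hAL i]

lemma PosDef.norm_smul_toEuclideanLin_mul_inv_sub_le {A : Matrix ι ι 𝕜} (hA : A.PosDef)
    {τ L c δ : ℝ} (hτ : 0 ≤ τ) (hL : 0 < L) (hAL : ∀ i, hA.isHermitian.eigenvalues i ≤ L)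
    (hc : 0 < c) {b x : EuclideanSpace 𝕜 ι}
    (hres : ‖b - toEuclideanLin (τ • 1 + A) x‖ ≤ δ * (1 + τ / L) / c) :
    ‖c • (toEuclideanLin (A * (τ • 1 + A)⁻¹) b - toEuclideanLin A x)‖ ≤ δ := by
  have hT : IsUnit (τ • 1 + A).det :=
    (PosDef.posSemidef_add (PosSemidef.one.smul hτ) hA).det_pos.ne'.isUnit
  rw [toEuclideanLin_mul_inv_sub hT, norm_smul, Real.norm_of_nonneg hc.le]
  calc c * ‖toEuclideanLin (A * (τ • 1 + A)⁻¹) (b - toEuclideanLin (τ • 1 + A) x)‖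
      ≤ c * (L / (τ + L) * (δ * (1 + τ / L) / c)) := by
        gcongr
        refine (norm_toEuclideanLin_apply_le _ _).trans ?_
        gcongr
        exact hA.l2_opNorm_mul_inv_smul_one_add_le hτ hL.le hAL
    _ = δ := by field_simp; ring

end Matrix

theorem stmt4_general {n m : ℕ} (hm : 1 ≤ m) (A : Matrix (Fin n) (Fin n) ℂ) (hA : A.PosDef)
    (lammax : ℝ)
    (hmax : ∀ i, hA.isHermitian.eigenvalues i ≤ lammax)
    (hmem : ∃ i, hA.isHermitian.eigenvalues i = lammax)
    (α : ℝ) (hα : 0 < α) (hα1 : α < 1)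
    (t w : Fin m → ℝ) (ht : ∀ k, 0 ≤ t k) (hw : ∀ k, 0 < w k)
    (b : EuclideanSpace ℂ (Fin n)) (x' : Fin m → EuclideanSpace ℂ (Fin n))
    (ε : ℝ)
    (hres : ∀ k, ‖b - Matrix.toEuclideanLin
        (((t k ^ (1/α) : ℝ) : ℂ) • (1 : Matrix (Fin n) (Fin n) ℂ) + A) (x' k)‖ ≤
      (ε / (2 * m)) * ((α * Real.pi) / Real.sin (α * Real.pi)) *
        ((1 + t k ^ (1/α) / lammax) / w k)) :
    ‖(∑ k, (Real.sin (α * Real.pi) / (α * Real.pi) * w k) •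
          Matrix.toEuclideanLin
            (A * (((t k ^ (1/α) : ℝ) : ℂ) • (1 : Matrix (Fin n) (Fin n) ℂ) + A)⁻¹) b)
        - ∑ k, (Real.sin (α * Real.pi) / (α * Real.pi) * w k) •
            Matrix.toEuclideanLin A (x' k)‖ ≤ ε / 2 := by
  obtain ⟨i₀, hi₀⟩ := hmem
  have hL : 0 < lammax := hi₀ ▸ hA.eigenvalues_pos i₀
  have hαπ : 0 < α * Real.pi := by positivity
  have hsin : 0 < Real.sin (α * Real.pi) :=
    Real.sin_pos_of_pos_of_lt_pi hαπ (mul_lt_of_lt_one_left Real.pi_pos hα1)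
  have hm' : (m : ℝ) ≠ 0 := Nat.cast_ne_zero.mpr (by omega)
  rw [← Finset.sum_sub_distrib]
  calc _ ≤ ∑ _k : Fin m, ε / (2 * m) := norm_sum_le_of_le _ fun k _ ↦ ?_
    _ = ε / 2 := by
      rw [Finset.sum_const, Finset.card_univ, Fintype.card_fin, nsmul_eq_mul]
      field_simp
  simp only [Complex.coe_smul] at hres ⊢
  rw [← smul_sub]
  refine hA.norm_smul_toEuclideanLin_mul_inv_sub_le (Real.rpow_nonneg (ht k) _) hL hmax
    (mul_pos (div_pos hsin hαπ) (hw k)) ((hres k).trans_eq ?_)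
  have := (hw k).ne'
  field_simp

theorem stmt4 {n m : ℕ} (hm : 1 ≤ m) (A : Matrix (Fin n) (Fin n) ℂ) (hA : A.PosDef)
    (lammax : ℝ)
    (hmax : ∀ i, hA.isHermitian.eigenvalues i ≤ lammax)
    (hmem : ∃ i, hA.isHermitian.eigenvalues i = lammax)
    (α : ℝ) (hα : 0 < α) (hα1 : α < 1)
    (t w : Fin m → ℝ) (ht : ∀ k, 0 ≤ t k) (hw : ∀ k, 0 < w k)
    (b : EuclideanSpace ℂ (Fin n)) (x' : Fin m → EuclideanSpace ℂ (Fin n))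
    (ε : ℝ) (hε : 0 < ε)
    (hres : ∀ k, ‖b - Matrix.toEuclideanLin
        (((t k ^ (1/α) : ℝ) : ℂ) • (1 : Matrix (Fin n) (Fin n) ℂ) + A) (x' k)‖ ≤
      (ε / (2 * m)) * ((α * Real.pi) / Real.sin (α * Real.pi)) *
        ((1 + t k ^ (1/α) / lammax) / w k)) :
    ‖(∑ k, (Real.sin (α * Real.pi) / (α * Real.pi) * w k) •
          Matrix.toEuclideanLin
            (A * (((t k ^ (1/α) : ℝ) : ℂ) • (1 : Matrix (Fin n) (Fin n) ℂ) + A)⁻¹) b)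
        - ∑ k, (Real.sin (α * Real.pi) / (α * Real.pi) * w k) •
            Matrix.toEuclideanLin A (x' k)‖ ≤ ε / 2 :=
  stmt4_general hm A hA lammax hmax hmem α hα hα1 t w ht hw b x' ε hres
end

section
/- Let A be an n×n Hermitian positive-definite matrix with largest eigenvalue λmax, 0 < α < 1, t ≥ 0, w > 0, and b, x̃ ∈ ℂⁿ with residual r = b − (t^{1/α} I + A) x̃. Then ‖(sin(απ)/(απ)) w A (t^{1/α} I + A)⁻¹ b − (sin(απ)/(απ)) w A x̃‖₂ ≤ (sin(απ)/(απ)) · w · ‖r‖₂ / (1 + t^{1/α}/λmax). -/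
/-!
Writing `M = t^{1/α} I + A` and `r = b - M x̃`, we have `A M⁻¹ b - A x̃ = A M⁻¹ r`, so it suffices
to bound the spectral norm of `A M⁻¹`. By the functional calculus `A M⁻¹ = f(A)` with
`f(x) = x / (t^{1/α} + x)`, and `f` is increasing on `(0, ∞)`, so on the spectrum of `A` it is
at most `f(λmax) = 1 / (1 + t^{1/α} / λmax)`.
-/

open Matrix
open scoped ComplexOrder

section
variable {n 𝕜 : Type*} [Fintype n] [DecidableEq n]

theorem Matrix.toEuclideanLin_mul_inv_sub_s5 [RCLike 𝕜] (A : Matrix n n 𝕜) {M : Matrix n n 𝕜}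
    (hM : IsUnit M.det) (b x : EuclideanSpace 𝕜 n) :
    toEuclideanLin (A * M⁻¹) b - toEuclideanLin A x =
      toEuclideanLin (A * M⁻¹) (b - toEuclideanLin M x) := by
  rw [map_sub, sub_right_inj, ← LinearMap.comp_apply, ← toLpLin_mul_same,
    nonsing_inv_mul_cancel_right M A hM]

theorem Matrix.PosDef.algebraMap_add [RCLike 𝕜] {A : Matrix n n 𝕜} (hA : A.PosDef) {s : ℝ}
    (hs : 0 ≤ s) : (algebraMap ℝ (Matrix n n 𝕜) s + A).PosDef := by
  rw [Algebra.algebraMap_eq_smul_one]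
  exact PosDef.posSemidef_add (PosSemidef.one.smul hs) hA

theorem Matrix.IsHermitian.mul_inv_algebraMap_add_eq_cfc [RCLike 𝕜] {A : Matrix n n 𝕜}
    (hA : A.IsHermitian) {s : ℝ} (hs : ∀ x ∈ spectrum ℝ A, s + x ≠ 0) :
    A * (algebraMap ℝ (Matrix n n 𝕜) s + A)⁻¹ = cfc (fun x => x / (s + x)) A := by
  have hM : algebraMap ℝ (Matrix n n 𝕜) s + A = cfc (fun x => s + x) A := by
    rw [cfc_add .., cfc_const .., cfc_id' ..]
  have hMA : cfc (fun x => x / (s + x)) A * (algebraMap ℝ (Matrix n n 𝕜) s + A) = A := by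
    rw [hM, ← cfc_mul .., cfc_congr (g := id) fun x hx => div_mul_cancel₀ x (hs x hx), cfc_id ..]
  have hunit : IsUnit (algebraMap ℝ (Matrix n n 𝕜) s + A).det := by
    rw [← isUnit_iff_isUnit_det, hM, isUnit_cfc_iff ..]
    exact hs
  calc A * (algebraMap ℝ (Matrix n n 𝕜) s + A)⁻¹
      = cfc (fun x => x / (s + x)) A * (algebraMap ℝ (Matrix n n 𝕜) s + A) *
          (algebraMap ℝ (Matrix n n 𝕜) s + A)⁻¹ := by rw [hMA]
    _ = cfc (fun x => x / (s + x)) A := mul_nonsing_inv_cancel_right _ _ hunit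

open scoped Matrix.Norms.L2Operator in
theorem Matrix.PosDef.l2_opNorm_mul_inv_algebraMap_add_le {A : Matrix n n ℂ} (hA : A.PosDef)
    {s lam : ℝ} (hs : 0 ≤ s) (hlam : 0 < lam) (hmax : ∀ i, hA.isHermitian.eigenvalues i ≤ lam) :
    ‖A * (algebraMap ℝ (Matrix n n ℂ) s + A)⁻¹‖ ≤ lam / (lam + s) := by
  have hspec : ∀ x ∈ spectrum ℝ A, 0 < x ∧ x ≤ lam := by
    rw [hA.isHermitian.spectrum_real_eq_range_eigenvalues]
    rintro - ⟨i, rfl⟩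
    exact ⟨hA.eigenvalues_pos i, hmax i⟩
  rw [hA.isHermitian.mul_inv_algebraMap_add_eq_cfc fun x hx => by linarith [hspec x hx]]
  refine norm_cfc_le (by positivity) fun x hx => ?_
  obtain ⟨hx0, hxlam⟩ := hspec x hx
  rw [Real.norm_of_nonneg (by positivity), div_le_div_iff₀ (by positivity) (by positivity)]
  nlinarith

open scoped Matrix.Norms.L2Operator in
theorem Matrix.PosDef.norm_toEuclideanLin_mul_inv_algebraMap_add_le {A : Matrix n n ℂ}
    (hA : A.PosDef) {s lam : ℝ} (hs : 0 ≤ s) (hlam : 0 < lam)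
    (hmax : ∀ i, hA.isHermitian.eigenvalues i ≤ lam) (r : EuclideanSpace ℂ n) :
    ‖toEuclideanLin (A * (algebraMap ℝ (Matrix n n ℂ) s + A)⁻¹) r‖ ≤ lam / (lam + s) * ‖r‖ :=
  (l2_opNorm_mulVec _ r).trans <|
    mul_le_mul_of_nonneg_right (hA.l2_opNorm_mul_inv_algebraMap_add_le hs hlam hmax) (norm_nonneg r)

end

theorem stmt5_general {n : ℕ} (A : Matrix (Fin n) (Fin n) ℂ) (hA : A.PosDef)
    (lammax : ℝ)
    (hmax : ∀ i, hA.isHermitian.eigenvalues i ≤ lammax)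
    (α : ℝ) (hα : 0 < α) (hα1 : α < 1)
    (t w : ℝ) (ht : 0 ≤ t) (hw : 0 < w)
    (b x' : EuclideanSpace ℂ (Fin n)) :
    ‖(Real.sin (α * Real.pi) / (α * Real.pi) * w) •
          Matrix.toEuclideanLin
            (A * (((t ^ (1/α) : ℝ) : ℂ) • (1 : Matrix (Fin n) (Fin n) ℂ) + A)⁻¹) b
        - (Real.sin (α * Real.pi) / (α * Real.pi) * w) • Matrix.toEuclideanLin A x'‖ ≤
      (Real.sin (α * Real.pi) / (α * Real.pi)) * w *
        ‖b - Matrix.toEuclideanLin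
          (((t ^ (1/α) : ℝ) : ℂ) • (1 : Matrix (Fin n) (Fin n) ℂ) + A) x'‖ /
        (1 + t ^ (1/α) / lammax) := by
  rcases isEmpty_or_nonempty (Fin n) with _ | ⟨⟨i⟩⟩
  · simp [Subsingleton.elim b 0, Subsingleton.elim x' 0]
  have hlam : 0 < lammax := (hA.eigenvalues_pos i).trans_le (hmax i)
  set s : ℝ := t ^ (1/α)
  have hs : 0 ≤ s := Real.rpow_nonneg ht _
  have hc : 0 ≤ Real.sin (α * Real.pi) / (α * Real.pi) * w := by
    have hsin := Real.sin_pos_of_pos_of_lt_pi (by positivity) (mul_lt_of_lt_one_left Real.pi_pos hα1)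
    positivity
  have hsmul_one : (s : ℂ) • (1 : Matrix (Fin n) (Fin n) ℂ) = algebraMap ℝ _ s := by
    rw [Algebra.algebraMap_eq_smul_one, Complex.coe_smul]
  have hMdet := (isUnit_iff_isUnit_det _).mp (hA.algebraMap_add hs).isUnit
  rw [hsmul_one, ← smul_sub, toEuclideanLin_mul_inv_sub_s5 A hMdet, norm_smul, Real.norm_of_nonneg hc]
  calc _ ≤ _ * (lammax / (lammax + s) * _) :=
        mul_le_mul_of_nonneg_left
          (hA.norm_toEuclideanLin_mul_inv_algebraMap_add_le hs hlam hmax _) hc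
    _ = _ := by field_simp

theorem stmt5 {n : ℕ} (A : Matrix (Fin n) (Fin n) ℂ) (hA : A.PosDef)
    (lammax : ℝ)
    (hmax : ∀ i, hA.isHermitian.eigenvalues i ≤ lammax)
    (hmem : ∃ i, hA.isHermitian.eigenvalues i = lammax)
    (α : ℝ) (hα : 0 < α) (hα1 : α < 1)
    (t w : ℝ) (ht : 0 ≤ t) (hw : 0 < w)
    (b x' : EuclideanSpace ℂ (Fin n)) :
    ‖(Real.sin (α * Real.pi) / (α * Real.pi) * w) •
          Matrix.toEuclideanLin
            (A * (((t ^ (1/α) : ℝ) : ℂ) • (1 : Matrix (Fin n) (Fin n) ℂ) + A)⁻¹) b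
        - (Real.sin (α * Real.pi) / (α * Real.pi) * w) • Matrix.toEuclideanLin A x'‖ ≤
      (Real.sin (α * Real.pi) / (α * Real.pi)) * w *
        ‖b - Matrix.toEuclideanLin
          (((t ^ (1/α) : ℝ) : ℂ) • (1 : Matrix (Fin n) (Fin n) ℂ) + A) x'‖ /
        (1 + t ^ (1/α) / lammax) :=
  stmt5_general A hA lammax hmax α hα hα1 t w ht hw b x'
end

section
/- Let A be an n×n Hermitian positive-definite matrix and 0 < α < 1. Then A^α = (sin(απ)/(απ)) · A · ∫₀^∞ (t^{1/α} I + A)⁻¹ dt, where A^α is defined by applying λ ↦ λ^α to the eigenvalues of A in a spectral decomposition. -/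
open Matrix MeasureTheory Set Real
open scoped ComplexOrder

/-! Conjugating by the eigenvector unitary turns every matrix in the statement into a function of
the eigenvalues, so it suffices to prove, for `λ > 0`,
`∫₀^∞ (t^{1/α} + λ)⁻¹ dt = (απ / sin απ) λ^{α-1}`. The substitution `t = (λu)^α` turns the left
side into `α λ^{α-1} ∫₀^∞ u^{α-1} / (1 + u) du`, and writing `1 / (1 + u) = ∫₀^∞ e^{-(1+u)s} ds`
and swapping the integrals (Tonelli) gives `Γ(α) Γ(1 - α) = π / sin πα`. -/

section ScalarIntegrals

variable {α : ℝ}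

lemma lintegral_ofReal_eq_ofReal_integral_of_pos {X : Type*} [MeasurableSpace X] {μ : Measure X}
    {f : X → ℝ} (hf : 0 ≤ᵐ[μ] f) (hpos : 0 < ∫ x, f x ∂μ) :
    ∫⁻ x, ENNReal.ofReal (f x) ∂μ = ENNReal.ofReal (∫ x, f x ∂μ) :=
  (ofReal_integral_eq_lintegral_ofReal (.of_integral_ne_zero hpos.ne') hf).symm

lemma integral_exp_neg_mul_Ioi {c : ℝ} (hc : 0 < c) :
    ∫ s in Ioi (0 : ℝ), exp (-(c * s)) = c⁻¹ := by
  simpa using integral_rpow_mul_exp_neg_mul_Ioi one_pos hc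

lemma lintegral_rpow_mul_exp_neg_one_add_mul_right {u : ℝ} (hu : 0 < u) :
    ∫⁻ s in Ioi (0 : ℝ), ENNReal.ofReal (u ^ (α - 1) * exp (-((1 + u) * s))) =
      ENNReal.ofReal (u ^ (α - 1) / (1 + u)) := by
  have hval : ∫ s in Ioi (0 : ℝ), u ^ (α - 1) * exp (-((1 + u) * s)) = u ^ (α - 1) / (1 + u) := by
    rw [integral_const_mul, integral_exp_neg_mul_Ioi (by linarith), div_eq_mul_inv]
  rw [lintegral_ofReal_eq_ofReal_integral_of_pos, hval]
  · exact ae_restrict_of_forall_mem measurableSet_Ioi fun s _ => by positivity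
  · rw [hval]; positivity

lemma lintegral_rpow_mul_exp_neg_one_add_mul_left (hα : 0 < α) {s : ℝ} (hs : 0 < s) :
    ∫⁻ u in Ioi (0 : ℝ), ENNReal.ofReal (u ^ (α - 1) * exp (-((1 + u) * s))) =
      ENNReal.ofReal (Gamma α * (s ^ ((1 - α) - 1) * exp (-(1 * s)))) := by
  have hval : ∫ u in Ioi (0 : ℝ), u ^ (α - 1) * exp (-((1 + u) * s)) =
      Gamma α * (s ^ ((1 - α) - 1) * exp (-(1 * s))) := by
    have hsplit : ∀ u : ℝ, u ^ (α - 1) * exp (-((1 + u) * s)) =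
        exp (-s) * (u ^ (α - 1) * exp (-(s * u))) := fun u => by
      rw [show -((1 + u) * s) = -s + -(s * u) by ring, exp_add]; ring
    simp_rw [hsplit]
    rw [integral_const_mul, integral_rpow_mul_exp_neg_mul_Ioi hα hs, one_div, inv_rpow hs.le,
      ← rpow_neg hs.le]
    ring_nf
  rw [lintegral_ofReal_eq_ofReal_integral_of_pos, hval]
  · exact ae_restrict_of_forall_mem measurableSet_Ioi fun u hu => by
      have : (0 : ℝ) < u := hu; positivity
  · rw [hval]; have := Gamma_pos_of_pos hα; positivity

theorem integral_rpow_div_one_add_Ioi (hα : 0 < α) (hα1 : α < 1) :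
    ∫ u in Ioi (0 : ℝ), u ^ (α - 1) / (1 + u) = π / sin (π * α) := by
  have hΓ := mul_pos (Gamma_pos_of_pos hα) (Gamma_pos_of_pos (sub_pos.mpr hα1))
  have hnonneg : 0 ≤ᵐ[volume.restrict (Ioi (0 : ℝ))] fun u => u ^ (α - 1) / (1 + u) :=
    ae_restrict_of_forall_mem measurableSet_Ioi fun u hu => by
      have : (0 : ℝ) < u := hu; positivity
  have hlint : ∫⁻ u in Ioi (0 : ℝ), ENNReal.ofReal (u ^ (α - 1) / (1 + u)) =
      ENNReal.ofReal (Gamma α * Gamma (1 - α)) := by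
    calc ∫⁻ u in Ioi (0 : ℝ), ENNReal.ofReal (u ^ (α - 1) / (1 + u))
        = ∫⁻ u in Ioi (0 : ℝ), ∫⁻ s in Ioi (0 : ℝ),
            ENNReal.ofReal (u ^ (α - 1) * exp (-((1 + u) * s))) :=
          (setLIntegral_congr_fun measurableSet_Ioi fun u hu =>
            lintegral_rpow_mul_exp_neg_one_add_mul_right hu).symm
      _ = ∫⁻ s in Ioi (0 : ℝ), ∫⁻ u in Ioi (0 : ℝ),
            ENNReal.ofReal (u ^ (α - 1) * exp (-((1 + u) * s))) :=
          lintegral_lintegral_swap (by fun_prop)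
      _ = ∫⁻ s in Ioi (0 : ℝ), ENNReal.ofReal (Gamma α * (s ^ ((1 - α) - 1) * exp (-(1 * s)))) :=
          setLIntegral_congr_fun measurableSet_Ioi fun s hs =>
            lintegral_rpow_mul_exp_neg_one_add_mul_left hα hs
      _ = ENNReal.ofReal (Gamma α * Gamma (1 - α)) := by
          have hval : ∫ s in Ioi (0 : ℝ), Gamma α * (s ^ ((1 - α) - 1) * exp (-(1 * s))) =
              Gamma α * Gamma (1 - α) := by
            rw [integral_const_mul, integral_rpow_mul_exp_neg_mul_Ioi (by linarith) one_pos]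
            simp
          rw [lintegral_ofReal_eq_ofReal_integral_of_pos, hval]
          · exact ae_restrict_of_forall_mem measurableSet_Ioi fun s hs => by
              have : (0 : ℝ) < s := hs; positivity
          · rwa [hval]
  rw [integral_eq_lintegral_of_nonneg_ae hnonneg (by fun_prop : Measurable _).aestronglyMeasurable,
    hlint, ENNReal.toReal_ofReal hΓ.le, Gamma_mul_Gamma_one_sub]

theorem integral_inv_rpow_one_div_add_Ioi (hα : 0 < α) (hα1 : α < 1) {c : ℝ} (hc : 0 < c) :
    ∫ t in Ioi (0 : ℝ), (t ^ (1 / α) + c)⁻¹ = α * π / sin (π * α) * c ^ (α - 1) := by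
  have hsubst : ∀ x ∈ Ioi (0 : ℝ), (α * x ^ (α - 1)) • ((x ^ α) ^ (1 / α) + c)⁻¹ =
      α * (x ^ (α - 1) * (x + c)⁻¹) := fun x hx => by
    rw [← rpow_mul (le_of_lt hx), mul_one_div_cancel hα.ne', rpow_one, smul_eq_mul, mul_assoc]
  have hscale : ∀ u ∈ Ioi (0 : ℝ), (c * u) ^ (α - 1) * (c * u + c)⁻¹ =
      c⁻¹ * c ^ (α - 1) * (u ^ (α - 1) / (1 + u)) := fun u hu => by
    rw [mul_rpow hc.le (le_of_lt hu), show c * u + c = c * (1 + u) by ring, mul_inv]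
    ring
  rw [← integral_comp_rpow_Ioi_of_pos hα, setIntegral_congr_fun measurableSet_Ioi hsubst,
    integral_const_mul]
  have hdilate := integral_comp_mul_left_Ioi' (fun x => x ^ (α - 1) * (x + c)⁻¹) 0 hc
  rw [mul_zero] at hdilate
  rw [← hdilate, setIntegral_congr_fun measurableSet_Ioi hscale, integral_const_mul,
    integral_rpow_div_one_add_Ioi hα hα1, smul_eq_mul]
  field_simp

lemma sin_pi_mul_pos (hα : 0 < α) (hα1 : α < 1) : 0 < sin (π * α) :=
  sin_pos_of_pos_of_lt_pi (by positivity) (by nlinarith [pi_pos])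

lemma integrableOn_inv_rpow_one_div_add_Ioi (hα : 0 < α) (hα1 : α < 1) {c : ℝ} (hc : 0 < c) :
    IntegrableOn (fun t : ℝ => (t ^ (1 / α) + c)⁻¹) (Ioi 0) := by
  -- the Bochner integral of a non-integrable function is `0`
  refine .of_integral_ne_zero ?_
  rw [integral_inv_rpow_one_div_add_Ioi hα hα1 hc]
  have := sin_pi_mul_pos hα hα1
  positivity

lemma rpow_eq_mul_integral_inv_rpow_one_div_add_Ioi (hα : 0 < α) (hα1 : α < 1) {c : ℝ}
    (hc : 0 < c) :
    c ^ α = sin (α * π) / (α * π) * (c * ∫ t in Ioi (0 : ℝ), (t ^ (1 / α) + c)⁻¹) := by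
  have := sin_pi_mul_pos hα hα1
  rw [integral_inv_rpow_one_div_add_Ioi hα hα1 hc, mul_comm α π, rpow_sub_one hc.ne']
  field_simp

end ScalarIntegrals

lemma Matrix.mul_diagonal_mul_apply {l m n α : Type*} [Fintype n] [DecidableEq n]
    [NonUnitalNonAssocSemiring α] (M : Matrix l n α) (d : n → α) (N : Matrix n m α) (i : l)
    (j : m) : (M * diagonal d * N) i j = ∑ k, M i k * d k * N k j := by
  rw [mul_apply]
  simp only [mul_diagonal]

namespace Matrix.IsHermitian

variable {n 𝕜 : Type*} [RCLike 𝕜] [Fintype n] [DecidableEq n] {A : Matrix n n 𝕜}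
  (hA : A.IsHermitian)
include hA

lemma cfc_id' : hA.cfc (fun x => x) = A :=
  hA.spectral_theorem.symm

lemma cfc_congr {f g : ℝ → ℝ} (hfg : ∀ i, f (hA.eigenvalues i) = g (hA.eigenvalues i)) :
    hA.cfc f = hA.cfc g := by
  simp only [IsHermitian.cfc, Function.comp_def, hfg]

lemma cfc_const (c : ℝ) : hA.cfc (fun _ => c) = (c : 𝕜) • 1 := by
  rw [IsHermitian.cfc, Function.comp_def, Function.comp_def, ← smul_one_eq_diagonal, map_smul,
    map_one]

lemma cfc_mul (f g : ℝ → ℝ) : hA.cfc f * hA.cfc g = hA.cfc (fun x => f x * g x) := by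
  rw [IsHermitian.cfc, IsHermitian.cfc, IsHermitian.cfc, ← map_mul, diagonal_mul_diagonal]
  simp [Function.comp_def]

lemma cfc_add (f g : ℝ → ℝ) : hA.cfc f + hA.cfc g = hA.cfc (fun x => f x + g x) := by
  rw [IsHermitian.cfc, IsHermitian.cfc, IsHermitian.cfc, ← map_add, diagonal_add]
  simp [Function.comp_def]

lemma real_smul_cfc (c : ℝ) (f : ℝ → ℝ) : (c : 𝕜) • hA.cfc f = hA.cfc (fun x => c * f x) := by
  rw [IsHermitian.cfc, IsHermitian.cfc, ← map_smul, ← diagonal_smul]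
  congr 2
  ext i
  simp

lemma inv_real_smul_one_add {c : ℝ} (hc : ∀ i, c + hA.eigenvalues i ≠ 0) :
    ((c : 𝕜) • 1 + A)⁻¹ = hA.cfc (fun x => (c + x)⁻¹) := by
  refine inv_eq_right_inv ?_
  have hsum : (c : 𝕜) • 1 + A = hA.cfc (fun x => c + x) := by
    rw [← cfc_add, cfc_const, cfc_id']
  rw [hsum, cfc_mul, hA.cfc_congr (g := fun _ => 1) fun i => mul_inv_cancel₀ (hc i), cfc_const]
  simp

lemma of_integral_cfc {X : Type*} [MeasurableSpace X] {μ : Measure X} {f : X → ℝ → ℝ}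
    (hf : ∀ i, Integrable (fun x => f x (hA.eigenvalues i)) μ) :
    Matrix.of (fun i j => ∫ x, hA.cfc (f x) i j ∂μ) = hA.cfc (fun y => ∫ x, f x y ∂μ) := by
  ext i j
  simp only [of_apply, IsHermitian.cfc, Unitary.conjStarAlgAut_apply, mul_diagonal_mul_apply,
    Function.comp_apply]
  rw [integral_finsetSum _ fun k _ => (((hf k).ofReal (𝕜 := 𝕜)).const_mul _).mul_const _]
  refine Finset.sum_congr rfl fun k _ => ?_
  rw [integral_mul_const, integral_const_mul, integral_ofReal]

end Matrix.IsHermitian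

theorem stmt11 {n : ℕ} (A : Matrix (Fin n) (Fin n) ℂ) (hA : A.PosDef)
    (α : ℝ) (hα : 0 < α) (hα1 : α < 1) :
    (hA.isHermitian.eigenvectorUnitary : Matrix (Fin n) (Fin n) ℂ) *
        Matrix.diagonal (fun i => ((hA.isHermitian.eigenvalues i ^ α : ℝ) : ℂ)) *
        star (hA.isHermitian.eigenvectorUnitary : Matrix (Fin n) (Fin n) ℂ) =
      ((Real.sin (α * Real.pi) / (α * Real.pi) : ℝ) : ℂ) •
        (A * Matrix.of (fun i j =>
          ∫ t in Set.Ioi (0 : ℝ),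
            ((((t ^ (1/α) : ℝ) : ℂ) • (1 : Matrix (Fin n) (Fin n) ℂ) + A)⁻¹) i j)) := by
  have hresolvent : Matrix.of (fun i j => ∫ t in Ioi (0 : ℝ),
        ((((t ^ (1 / α) : ℝ) : ℂ) • (1 : Matrix (Fin n) (Fin n) ℂ) + A)⁻¹) i j) =
      hA.isHermitian.cfc (fun c => ∫ t in Ioi (0 : ℝ), (t ^ (1 / α) + c)⁻¹) := by
    rw [← hA.isHermitian.of_integral_cfc (f := fun t c => (t ^ (1 / α) + c)⁻¹) fun i =>
      integrableOn_inv_rpow_one_div_add_Ioi hα hα1 (hA.eigenvalues_pos i)]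
    ext i j
    refine setIntegral_congr_fun measurableSet_Ioi fun t ht => ?_
    exact congrFun₂ (hA.isHermitian.inv_real_smul_one_add fun k =>
      (add_pos (rpow_pos_of_pos ht _) (hA.eigenvalues_pos k)).ne') i j
  calc _ = hA.isHermitian.cfc (· ^ α) := rfl
    _ = hA.isHermitian.cfc fun c =>
          sin (α * π) / (α * π) * (c * ∫ t in Ioi (0 : ℝ), (t ^ (1 / α) + c)⁻¹) :=
      hA.isHermitian.cfc_congr fun i =>
        rpow_eq_mul_integral_inv_rpow_one_div_add_Ioi hα hα1 (hA.eigenvalues_pos i)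
    _ = _ := by
      rw [← hA.isHermitian.real_smul_cfc, ← hA.isHermitian.cfc_mul, hA.isHermitian.cfc_id',
        hresolvent]
      rfl
end
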